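/- If G is a finite simple graph on n vertices, then θ(G) ≤ 2·√(n·im(G)), where im(G) is the induced matching number of G. -/

import Mathlib

namespace ThetaPaper

variable {α : Type*} [DecidableEq α]

def delF (X : Finset (Finset α)) (v : α) : Finset (Finset α) :=
  X.filter fun S => v ∉ S

def lkF (X : Finset (Finset α)) (v : α) : Finset (Finset α) :=
  X.filter fun T => v ∉ T ∧ insert v T ∈ X

def vertF (X : Finset (Finset α)) : Finset α := X.biUnion id

def nonConeF (X : Finset (Finset α)) : Finset α :=
  (vertF X).filter fun v => delF X v ≠ lkF X v

lemma delF_card_lt {X : Finset (Finset α)} {v : α} (h : v ∈ nonConeF X) :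
    (delF X v).card < X.card := by
  obtain ⟨A, hA, hvA⟩ := Finset.mem_biUnion.mp (Finset.mem_filter.mp h).1
  refine Finset.card_lt_card ⟨Finset.filter_subset _ _, fun hsub => ?_⟩
  have h2 := hsub hA
  rw [delF, Finset.mem_filter] at h2
  exact h2.2 hvA

lemma lkF_card_lt {X : Finset (Finset α)} {v : α} (h : v ∈ nonConeF X) :
    (lkF X v).card < X.card := by
  obtain ⟨A, hA, hvA⟩ := Finset.mem_biUnion.mp (Finset.mem_filter.mp h).1
  refine Finset.card_lt_card ⟨Finset.filter_subset _ _, fun hsub => ?_⟩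
  have h2 := hsub hA
  rw [lkF, Finset.mem_filter] at h2
  exact h2.2.1 hvA

def theta (X : Finset (Finset α)) : ℕ :=
  if h : (nonConeF X).Nonempty then
    (nonConeF X).attach.inf' (Finset.attach_nonempty_iff.mpr h) fun v =>
      max (theta (delF X v.1)) (theta (lkF X v.1) + 1)
  else 0
termination_by X.card
decreasing_by
  · exact delF_card_lt v.2
  · exact lkF_card_lt v.2

def IsComplex (X : Finset (Finset α)) : Prop :=
  ∀ A ∈ X, ∀ B, B ⊆ A → B ∈ X

/-- `dim(X)`, as an integer: the maximum of `|A| - 1` over faces `A ∈ X`. -/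
noncomputable def dimZ (X : Finset (Finset α)) : ℤ :=
  sSup {d : ℤ | ∃ A ∈ X, d = (A.card : ℤ) - 1}

/-- A circuit (minimal non-face) of `X`. -/
def IsCircuit (X : Finset (Finset α)) (S : Finset α) : Prop :=
  S ∉ X ∧ ∀ T ⊂ S, T ∈ X

/-- A circuit cover of `X`. -/
def IsCircuitCover (X : Finset (Finset α)) (C : Finset α) : Prop :=
  ∀ S : Finset α, IsCircuit X S → (S.card : ℤ) - 1 ≤ ((S ∩ C).card : ℤ)

/-- The circuit cover number `ccn(X)` of a complex with vertex set `V`. -/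
noncomputable def ccnZ (V : Finset α) (X : Finset (Finset α)) : ℤ :=
  sInf {k : ℤ | ∃ C ⊆ V, IsCircuitCover X C ∧
    k = dimZ (X.filter fun A => A ⊆ C) + 1}

/-- The simplicial join. -/
def joinF (X₁ X₂ : Finset (Finset α)) : Finset (Finset α) :=
  X₁.biUnion fun A => X₂.image fun B => A ∪ B

/-- A facet (maximal face) of `X`. -/
def IsFacet (X : Finset (Finset α)) (B : Finset α) : Prop :=
  B ∈ X ∧ ∀ C ∈ X, B ⊆ C → C = B

/-- An elementary `k`-collapse: remove the interval `[A, B]` where `A` is a face of size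
at most `k` contained in the unique facet `B`. -/
def ElemCollapse (k : ℕ) (X Y : Finset (Finset α)) : Prop :=
  ∃ A B : Finset α, A ∈ X ∧ A.card ≤ k ∧ IsFacet X B ∧ A ⊆ B ∧
    (∀ C, IsFacet X C → A ⊆ C → C = B) ∧
    Y = X.filter fun C => ¬ (A ⊆ C ∧ C ⊆ B)

/-- `X` is `k`-collapsible: it reduces to the void complex by elementary `k`-collapses. -/
def Collapsible (k : ℕ) (X : Finset (Finset α)) : Prop :=
  Relation.ReflTransGen (ElemCollapse k) X ∅

/-- The collapsibility number `C(X)`. -/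
noncomputable def collapseNum (X : Finset (Finset α)) : ℕ :=
  sInf {k : ℕ | Collapsible k X}

/-- `k(X)`: the maximum size of a set `{x₁, …, x_k}` of vertices of `X` admitting facets
`A₁, …, A_{k+1}` with `x_i ∉ A_i` and `x_i ∈ A_j` for `i < j`. -/
noncomputable def kNum (X : Finset (Finset α)) : ℕ :=
  sSup {k : ℕ | ∃ (x : Fin k → α) (A : Fin (k + 1) → Finset α),
    Function.Injective x ∧ (∀ i, {x i} ∈ X) ∧ (∀ j, IsFacet X (A j)) ∧
    (∀ i : Fin k, x i ∉ A i.castSucc) ∧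
    (∀ (i : Fin k) (j : Fin (k + 1)), (i : ℕ) < (j : ℕ) → x i ∈ A j)}

/-- Vertex decomposable simplicial complexes. -/
inductive VertexDecomposable : Finset (Finset α) → Prop
  | simplex (S : Finset α) : VertexDecomposable S.powerset
  | shed (X : Finset (Finset α)) (v : α) (hv : {v} ∈ X)
      (hdel : VertexDecomposable (delF X v)) (hlk : VertexDecomposable (lkF X v))
      (hfacet : ∀ B, IsFacet (delF X v) B → IsFacet X B) : VertexDecomposable X

section Graphs

variable {V : Type*} [Fintype V] [DecidableEq V]

open Classical in
/-- The independence complex of a graph, as a `Finset` of faces. -/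
noncomputable def indComplex (G : SimpleGraph V) : Finset (Finset V) :=
  Finset.univ.powerset.filter fun A => ∀ x ∈ A, ∀ y ∈ A, ¬ G.Adj x y

/-- The theta-number of a graph: the theta-number of its independence complex. -/
noncomputable def thetaG (G : SimpleGraph V) : ℕ := theta (indComplex G)

/-- A graph is chordal if it has no induced cycle of length greater than `3`. -/
def Chordal {W : Type*} (G : SimpleGraph W) : Prop :=
  ∀ n : ℕ, 3 < n → IsEmpty (SimpleGraph.cycleGraph n ↪g G)

/-- Contraction of the edge `xy`: the merged vertex is `x`, and `y` becomes isolated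
(isolated vertices are irrelevant for the independence complex/theta-number). -/
def contractEdge (G : SimpleGraph V) (x y : V) : SimpleGraph V where
  Adj a b := a ≠ b ∧ a ≠ y ∧ b ≠ y ∧
    ((a = x ∧ (G.Adj x b ∨ G.Adj y b)) ∨
     (b = x ∧ (G.Adj a x ∨ G.Adj a y)) ∨
     (a ≠ x ∧ b ≠ x ∧ G.Adj a b))
  symm := by
    constructor
    rintro a b ⟨hab, hay, hby, h⟩
    refine ⟨Ne.symm hab, hby, hay, ?_⟩
    rcases h with ⟨ha, h⟩ | ⟨hb, h⟩ | ⟨ha, hb, h⟩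
    · exact Or.inr (Or.inl ⟨ha, h.imp (fun t => t.symm) (fun t => t.symm)⟩)
    · exact Or.inl ⟨hb, h.imp (fun t => t.symm) (fun t => t.symm)⟩
    · exact Or.inr (Or.inr ⟨hb, ha, h.symm⟩)
  loopless := by constructor; rintro a ⟨h, -⟩; exact h rfl

/-- One edge-contraction step: `H` is obtained from `G` by contracting an edge of `G`. -/
def ContractionStep (G H : SimpleGraph V) : Prop :=
  ∃ x y, G.Adj x y ∧ H = contractEdge G x y

/-- A matching of `G` (a set of pairwise disjoint edges). -/
def IsMatching (G : SimpleGraph V) (M : Finset (Sym2 V)) : Prop :=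
  (∀ e ∈ M, e ∈ G.edgeSet) ∧
    ∀ e ∈ M, ∀ f ∈ M, e ≠ f → ∀ x, x ∈ e → x ∉ f

/-- An induced matching of `G`: a matching such that no two vertices belonging to
different edges of it are adjacent. -/
def IsInducedMatching (G : SimpleGraph V) (M : Finset (Sym2 V)) : Prop :=
  IsMatching G M ∧ ∀ e ∈ M, ∀ f ∈ M, e ≠ f → ∀ x ∈ e, ∀ y ∈ f, ¬ G.Adj x y

/-- The induced matching number `im(G)`. -/
noncomputable def inducedMatchingNum (G : SimpleGraph V) : ℕ :=
  sSup {k : ℕ | ∃ M, IsInducedMatching G M ∧ M.card = k}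

/-- A maximal matching. -/
def IsMaximalMatching (G : SimpleGraph V) (M : Finset (Sym2 V)) : Prop :=
  IsMatching G M ∧ ∀ N, IsMatching G N → M ⊆ N → N = M

/-- `min-m(G)`: the minimum size of a maximal matching. -/
noncomputable def minMaximalMatchingNum (G : SimpleGraph V) : ℕ :=
  sInf {k : ℕ | ∃ M, IsMaximalMatching G M ∧ M.card = k}

/-- Independent (stable) sets of a graph. -/
def IsIndepSet (G : SimpleGraph V) (A : Finset V) : Prop :=
  ∀ x ∈ A, ∀ y ∈ A, ¬ G.Adj x y

/-- A vertex cover. -/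
def IsVertexCover (G : SimpleGraph V) (C : Finset V) : Prop :=
  ∀ x y, G.Adj x y → x ∈ C ∨ y ∈ C

/-- `α(G[F])`: the maximum size of an independent set of `G` contained in `F`. -/
noncomputable def indepNumOn (G : SimpleGraph V) (F : Finset V) : ℕ :=
  sSup {k : ℕ | ∃ A ⊆ F, IsIndepSet G A ∧ A.card = k}

/-- The circuit cover number of a graph: `ccn(G) = min{α(G[F]) : F a vertex cover}`. -/
noncomputable def ccnG (G : SimpleGraph V) : ℕ :=
  sInf {k : ℕ | ∃ F, IsVertexCover G F ∧ k = indepNumOn G F}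

open Classical in
/-- The closed neighborhood of a vertex, as a `Finset`. -/
noncomputable def closedNbhd (G : SimpleGraph V) (x : V) : Finset V :=
  Finset.univ.filter fun z => z = x ∨ G.Adj x z

/-- The maximum privacy degree `Γ(G) = max{|N[x] \ N[y]| : xy ∈ E(G)}`. -/
noncomputable def privacyDeg (G : SimpleGraph V) : ℕ :=
  sSup {k : ℕ | ∃ x y, G.Adj x y ∧ k = (closedNbhd G x \ closedNbhd G y).card}

open Classical in
/-- The maximum degree `Δ(G)`. -/
noncomputable def maxDeg (G : SimpleGraph V) : ℕ :=
  sSup {k : ℕ | ∃ v, k = (Finset.univ.filter fun z => G.Adj v z).card}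

end Graphs

open Classical in
/-- `V(M)`: the set of vertices incident to the edges of `M`. -/
noncomputable def matchVerts {V : Type*} [Fintype V] (M : Finset (Sym2 V)) : Finset V :=
  Finset.univ.filter fun x => ∃ e ∈ M, x ∈ e

variable {X : Finset (Finset α)}

/-!
Induct on the vertex set `S` of an induced subgraph, with `N = |S|` and `m = im(G)`.
If some non-isolated vertex `v` has `d = |N[v] ∩ S|` with `m d ≥ √(N m)`, branch at `v`:
deleting `v` costs nothing, and passing to the link `S \ N[v]` removes `d` vertices, which
lowers `2√(N m)` by at least one. Otherwise all non-isolated degrees are below `√(N / m)`;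
a maximum induced matching `M` inside `S` then dominates every edge, so the at most
`2 m √(N / m)` vertices of `N[V(M)] ∩ S` form a vertex cover, and branching on a vertex cover
bounds `θ` by its size.
-/

open Finset

lemma theta_le_max_of_mem_nonConeF {v : α} (hv : v ∈ nonConeF X) :
    theta X ≤ max (theta (delF X v)) (theta (lkF X v) + 1) := by
  rw [theta, dif_pos ⟨v, hv⟩]
  exact Finset.inf'_le _ (Finset.mem_attach _ ⟨v, hv⟩)

lemma theta_eq_zero_of_nonConeF_eq_empty (h : nonConeF X = ∅) : theta X = 0 := by
  rw [theta, dif_neg (Finset.not_nonempty_iff_eq_empty.mpr h)]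

lemma two_mul_sqrt_sub_add_one_le {P Q : ℝ} (hQ : 1 ≤ Q) (hPQ : √P ≤ Q) (hQP : Q ≤ P) :
    2 * √(P - Q) + 1 ≤ 2 * √P := by
  have hP : 1 ≤ √P := Real.one_le_sqrt.mpr (hQ.trans hQP)
  have hsq : √P ^ 2 = P := Real.sq_sqrt (by linarith)
  have : √(P - Q) ≤ √P - 1 / 2 := Real.sqrt_le_iff.mpr ⟨by linarith, by nlinarith⟩
  linarith

section IndependenceComplex

variable {V : Type*} {G : SimpleGraph V}

open Classical in
noncomputable def indComplexOn (G : SimpleGraph V) (S : Finset V) : Finset (Finset V) :=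
  S.powerset.filter (IsIndepSet G)

def IsVertexCoverOn (G : SimpleGraph V) (S C : Finset V) : Prop :=
  ∀ x ∈ S, ∀ y ∈ S, G.Adj x y → x ∈ C ∨ y ∈ C

lemma mem_indComplexOn {S A : Finset V} :
    A ∈ indComplexOn G S ↔ A ⊆ S ∧ IsIndepSet G A := by
  simp [indComplexOn]

variable [DecidableEq V]

lemma isIndepSet_insert {A : Finset V} {v : V} :
    IsIndepSet G (insert v A) ↔ IsIndepSet G A ∧ ∀ z ∈ A, ¬ G.Adj v z := by
  simp only [IsIndepSet, mem_insert, forall_eq_or_imp, G.irrefl, not_false_eq_true, true_and]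
  exact ⟨fun h => ⟨fun x hx y hy => h.2 x hx |>.2 y hy, h.1⟩,
    fun h => ⟨h.2, fun x hx => ⟨fun hxv => h.2 x hx hxv.symm, h.1 x hx⟩⟩⟩

lemma delF_indComplexOn (S : Finset V) (v : V) :
    delF (indComplexOn G S) v = indComplexOn G (S.erase v) := by
  ext A
  simp only [delF, mem_filter, mem_indComplexOn, subset_erase]
  tauto

lemma IsVertexCoverOn.erase {S T C : Finset V} {w : V} (hC : IsVertexCoverOn G S C)
    (hTS : T ⊆ S) (hwT : w ∉ T) : IsVertexCoverOn G T (C.erase w) := by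
  intro x hx y hy hxy
  have hxw : x ≠ w := fun h => hwT (h ▸ hx)
  have hyw : y ≠ w := fun h => hwT (h ▸ hy)
  simpa [hxw, hyw] using hC x (hTS hx) y (hTS hy) hxy

variable [Fintype V]

lemma indComplex_eq_indComplexOn_univ (G : SimpleGraph V) :
    indComplex G = indComplexOn G univ := by
  ext A
  simp [indComplex, indComplexOn, IsIndepSet]

lemma mem_closedNbhd {v z : V} : z ∈ closedNbhd G v ↔ z = v ∨ G.Adj v z := by
  simp [closedNbhd]

lemma sdiff_closedNbhd_ssubset {S : Finset V} {v : V} (hv : v ∈ S) :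
    S \ closedNbhd G v ⊂ S :=
  (ssubset_iff_of_subset sdiff_subset).mpr ⟨v, hv, by simp [mem_closedNbhd]⟩

lemma lkF_indComplexOn {S : Finset V} {v : V} (hv : v ∈ S) :
    lkF (indComplexOn G S) v = indComplexOn G (S \ closedNbhd G v) := by
  ext A
  simp only [lkF, mem_filter, mem_indComplexOn, insert_subset_iff, isIndepSet_insert,
    subset_sdiff, disjoint_left, mem_closedNbhd, not_or]
  constructor
  · rintro ⟨⟨hAS, -⟩, hvA, -, hA, hvnA⟩
    exact ⟨⟨hAS, fun z hz => ⟨fun hzv => hvA (hzv ▸ hz), hvnA z hz⟩⟩, hA⟩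
  · rintro ⟨⟨hAS, hAv⟩, hA⟩
    exact ⟨⟨hAS, hA⟩, fun hvA => (hAv hvA).1 rfl, ⟨hv, hAS⟩, hA, fun z hz => (hAv hz).2⟩

lemma mem_nonConeF_indComplexOn {S : Finset V} {v : V} :
    v ∈ nonConeF (indComplexOn G S) ↔ v ∈ S ∧ ∃ u ∈ S, G.Adj v u := by
  have hsingleton : ∀ {u}, u ∈ S → {u} ∈ indComplexOn G S := fun hu =>
    mem_indComplexOn.mpr ⟨singleton_subset_iff.mpr hu, by simp [IsIndepSet]⟩
  constructor
  · intro h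
    obtain ⟨hvert, hne⟩ := mem_filter.mp h
    obtain ⟨A, hA, hvA⟩ := mem_biUnion.mp hvert
    have hvS : v ∈ S := (mem_indComplexOn.mp hA).1 hvA
    refine ⟨hvS, ?_⟩
    by_contra! hisolated
    apply hne
    rw [delF_indComplexOn, lkF_indComplexOn hvS]
    congr 1
    ext z
    simp only [mem_erase, mem_sdiff, mem_closedNbhd, not_or]
    exact ⟨fun ⟨hzv, hz⟩ => ⟨hz, hzv, hisolated z hz⟩, fun ⟨hz, hzv, _⟩ => ⟨hzv, hz⟩⟩
  · rintro ⟨hvS, u, huS, hvu⟩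
    refine mem_filter.mpr ⟨mem_biUnion.mpr ⟨{v}, hsingleton hvS, mem_singleton_self v⟩, ?_⟩
    intro heq
    have hu : {u} ∈ delF (indComplexOn G S) v :=
      mem_filter.mpr ⟨hsingleton huS, by simpa using hvu.ne⟩
    rw [heq, lkF_indComplexOn hvS, mem_indComplexOn, singleton_subset_iff, mem_sdiff,
      mem_closedNbhd] at hu
    exact hu.1.2 (Or.inr hvu)

lemma theta_indComplexOn_le_max {S : Finset V} {v u : V} (hv : v ∈ S) (hu : u ∈ S)
    (hvu : G.Adj v u) :
    theta (indComplexOn G S) ≤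
      max (theta (indComplexOn G (S.erase v)))
        (theta (indComplexOn G (S \ closedNbhd G v)) + 1) := by
  have := theta_le_max_of_mem_nonConeF (mem_nonConeF_indComplexOn.mpr ⟨hv, u, hu, hvu⟩)
  rwa [delF_indComplexOn, lkF_indComplexOn hv] at this

lemma theta_indComplexOn_eq_zero {S : Finset V} (hS : IsIndepSet G S) :
    theta (indComplexOn G S) = 0 := by
  refine theta_eq_zero_of_nonConeF_eq_empty (eq_empty_of_forall_notMem fun v hv => ?_)
  obtain ⟨hv, u, hu, hvu⟩ := mem_nonConeF_indComplexOn.mp hv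
  exact hS v hv u hu hvu

theorem theta_indComplexOn_le_card_of_isVertexCoverOn {S C : Finset V}
    (hC : IsVertexCoverOn G S C) : theta (indComplexOn G S) ≤ #C := by
  induction S using Finset.strongInduction generalizing C with
  | H S ih =>
  by_cases hS : IsIndepSet G S
  · simp [theta_indComplexOn_eq_zero hS]
  obtain ⟨x, hx, y, hy, hxy⟩ : ∃ x ∈ S, ∃ y ∈ S, G.Adj x y := by
    simpa [IsIndepSet] using hS
  obtain ⟨w, hw, u, hu, hwu, hwC⟩ : ∃ w ∈ S, ∃ u ∈ S, G.Adj w u ∧ w ∈ C := by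
    rcases hC x hx y hy hxy with h | h
    exacts [⟨x, hx, y, hy, hxy, h⟩, ⟨y, hy, x, hx, hxy.symm, h⟩]
  -- Branch at `w`: both `S - w` and `S \ N[w]` avoid `w`, so `C - w` covers them.
  have hcard : #(C.erase w) + 1 = #C := card_erase_add_one hwC
  have hdel := ih _ (erase_ssubset hw) (hC.erase (erase_subset w S) (notMem_erase w S))
  have hlk := ih (S \ closedNbhd G w)
    (sdiff_closedNbhd_ssubset hw)
    (hC.erase sdiff_subset fun h => (mem_sdiff.mp h).2 (mem_closedNbhd.mpr (Or.inl rfl)))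
  have := theta_indComplexOn_le_max hw hu hwu
  omega

end IndependenceComplex

section InducedMatching

variable {V : Type*} {G : SimpleGraph V}

lemma isInducedMatching_singleton {x y : V} (hxy : G.Adj x y) :
    IsInducedMatching G {s(x, y)} := by
  refine ⟨⟨?_, ?_⟩, ?_⟩ <;> simp [hxy]

variable [Fintype V]

lemma card_le_inducedMatchingNum {M : Finset (Sym2 V)} (hM : IsInducedMatching G M) :
    #M ≤ inducedMatchingNum G :=
  le_csSup ⟨Fintype.card (Sym2 V), by rintro k ⟨M, -, rfl⟩; exact card_le_univ M⟩ ⟨M, hM, rfl⟩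

lemma one_le_inducedMatchingNum {x y : V} (hxy : G.Adj x y) : 1 ≤ inducedMatchingNum G := by
  simpa using card_le_inducedMatchingNum (isInducedMatching_singleton hxy)

lemma mem_matchVerts {M : Finset (Sym2 V)} {x : V} : x ∈ matchVerts M ↔ ∃ e ∈ M, x ∈ e := by
  simp [matchVerts]

lemma IsMatching.exists_adj_of_mem_matchVerts {M : Finset (Sym2 V)} (hM : IsMatching G M)
    {x : V} (hx : x ∈ matchVerts M) : ∃ y ∈ matchVerts M, G.Adj x y := by
  obtain ⟨e, he, hxe⟩ := mem_matchVerts.mp hx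
  refine ⟨Sym2.Mem.other hxe, mem_matchVerts.mpr ⟨e, he, Sym2.other_mem hxe⟩, ?_⟩
  rw [← SimpleGraph.mem_edgeSet, Sym2.other_spec hxe]
  exact hM.1 e he

variable [DecidableEq V]

lemma card_matchVerts_le (M : Finset (Sym2 V)) : #(matchVerts M) ≤ 2 * #M := by
  have hsub : matchVerts M ⊆ M.biUnion Sym2.toFinset := fun x hx => by
    simpa [mem_matchVerts] using hx
  refine (card_le_card hsub).trans ((card_biUnion_le_card_mul _ _ 2 fun e _ => ?_).trans_eq
    (mul_comm _ _))
  rw [Sym2.card_toFinset]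
  split_ifs <;> omega

lemma IsInducedMatching.insert {M : Finset (Sym2 V)} (hM : IsInducedMatching G M) {x y : V}
    (hxy : G.Adj x y)
    (hfar : ∀ w ∈ matchVerts M, x ∉ closedNbhd G w ∧ y ∉ closedNbhd G w) :
    IsInducedMatching G (insert s(x, y) M) := by
  have hfar' : ∀ f ∈ M, ∀ z ∈ f, z ≠ x ∧ z ≠ y ∧ ¬ G.Adj x z ∧ ¬ G.Adj y z := by
    intro f hf z hz
    have := hfar z (mem_matchVerts.mpr ⟨f, hf, hz⟩)
    simp only [mem_closedNbhd, not_or] at this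
    exact ⟨Ne.symm this.1.1, Ne.symm this.2.1, fun h => this.1.2 h.symm,
      fun h => this.2.2 h.symm⟩
  obtain ⟨⟨hedge, hdisj⟩, hind⟩ := hM
  refine ⟨⟨?_, ?_⟩, ?_⟩
  · simpa [forall_mem_insert] using ⟨hxy, hedge⟩
  · intro e he f hf hef z hze hzf
    rcases mem_insert.mp he with rfl | heM <;> rcases mem_insert.mp hf with rfl | hfM
    · exact hef rfl
    · rcases Sym2.mem_iff.mp hze with rfl | rfl
      exacts [(hfar' f hfM _ hzf).1 rfl, (hfar' f hfM _ hzf).2.1 rfl]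
    · rcases Sym2.mem_iff.mp hzf with rfl | rfl
      exacts [(hfar' e heM _ hze).1 rfl, (hfar' e heM _ hze).2.1 rfl]
    · exact hdisj e heM f hfM hef z hze hzf
  · intro e he f hf hef z hze w hwf
    rcases mem_insert.mp he with rfl | heM <;> rcases mem_insert.mp hf with rfl | hfM
    · exact absurd rfl hef
    · rcases Sym2.mem_iff.mp hze with rfl | rfl
      exacts [(hfar' f hfM w hwf).2.2.1, (hfar' f hfM w hwf).2.2.2]
    · rcases Sym2.mem_iff.mp hwf with rfl | rfl
      exacts [fun h => (hfar' e heM z hze).2.2.1 h.symm, fun h => (hfar' e heM z hze).2.2.2 h.symm]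
    · exact hind e heM f hfM hef z hze w hwf

/-- A maximum induced matching inside `S` dominates every edge of `G[S]`. -/
lemma exists_isInducedMatching_isVertexCoverOn (S : Finset V) :
    ∃ M, IsInducedMatching G M ∧ matchVerts M ⊆ S ∧
      IsVertexCoverOn G S ((matchVerts M).biUnion fun w => S ∩ closedNbhd G w) := by
  classical
  obtain ⟨M, hM, hmax⟩ := exists_max_image
    (univ.filter fun M => IsInducedMatching G M ∧ matchVerts M ⊆ S) card
    ⟨∅, by simp [IsInducedMatching, IsMatching, subset_iff, mem_matchVerts]⟩
  obtain ⟨hMind, hMS⟩ := (mem_filter.mp hM).2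
  refine ⟨M, hMind, hMS, fun x hx y hy hxy => ?_⟩
  by_contra! hfar
  simp only [mem_biUnion, mem_inter, not_exists, not_and] at hfar
  have hfar' : ∀ w ∈ matchVerts M, x ∉ closedNbhd G w ∧ y ∉ closedNbhd G w :=
    fun w hw => ⟨hfar.1 w hw hx, hfar.2 w hw hy⟩
  have hxM : s(x, y) ∉ M := fun h =>
    (hfar' x (mem_matchVerts.mpr ⟨_, h, Sym2.mem_mk_left x y⟩)).1 (mem_closedNbhd.mpr (Or.inl rfl))
  have hinsS : matchVerts (insert s(x, y) M) ⊆ S := fun z hz => by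
    obtain ⟨e, he, hze⟩ := mem_matchVerts.mp hz
    rcases mem_insert.mp he with rfl | he
    · rcases Sym2.mem_iff.mp hze with rfl | rfl <;> assumption
    · exact hMS (mem_matchVerts.mpr ⟨e, he, hze⟩)
  have := hmax _ (mem_filter.mpr ⟨mem_univ _, hMind.insert hxy hfar', hinsS⟩)
  rw [card_insert_of_notMem hxM] at this
  omega

end InducedMatching

section Graphs

variable {V : Type*} [Fintype V] [DecidableEq V] {G : SimpleGraph V}

theorem theta_indComplexOn_le_of_degree_le {S : Finset V} {D : ℝ} (hD : 0 ≤ D)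
    (hdeg : ∀ v ∈ S, (∃ u ∈ S, G.Adj v u) → (#(S ∩ closedNbhd G v) : ℝ) ≤ D) :
    (theta (indComplexOn G S) : ℝ) ≤ 2 * inducedMatchingNum G * D := by
  obtain ⟨M, hM, hMS, hcover⟩ := exists_isInducedMatching_isVertexCoverOn (G := G) S
  have hdegM : ∀ w ∈ matchVerts M, (#(S ∩ closedNbhd G w) : ℝ) ≤ D := fun w hw => by
    obtain ⟨u, hu, hwu⟩ := hM.1.exists_adj_of_mem_matchVerts hw
    exact hdeg w (hMS hw) ⟨u, hMS hu, hwu⟩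
  have hW : (#(matchVerts M) : ℝ) ≤ 2 * inducedMatchingNum G := by
    exact_mod_cast (card_matchVerts_le M).trans (by gcongr; exact card_le_inducedMatchingNum hM)
  calc (theta (indComplexOn G S) : ℝ)
      ≤ #((matchVerts M).biUnion fun w => S ∩ closedNbhd G w) := by
        exact_mod_cast theta_indComplexOn_le_card_of_isVertexCoverOn hcover
    _ ≤ ∑ w ∈ matchVerts M, (#(S ∩ closedNbhd G w) : ℝ) := by exact_mod_cast card_biUnion_le
    _ ≤ #(matchVerts M) * D := by simpa using sum_le_sum hdegM
    _ ≤ 2 * inducedMatchingNum G * D := by gcongr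

lemma theta_indComplexOn_le_two_mul_sqrt_of_high_degree {S : Finset V} {m : ℝ} (hm : 1 ≤ m)
    (ih : ∀ T ⊂ S, (theta (indComplexOn G T) : ℝ) ≤ 2 * √(#T * m))
    {v u : V} (hv : v ∈ S) (hu : u ∈ S) (hvu : G.Adj v u)
    (hdeg : √(#S * m) ≤ m * #(S ∩ closedNbhd G v)) :
    (theta (indComplexOn G S) : ℝ) ≤ 2 * √(#S * m) := by
  have hvN : v ∈ S ∩ closedNbhd G v := mem_inter.mpr ⟨hv, mem_closedNbhd.mpr (Or.inl rfl)⟩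
  have hd : (1 : ℝ) ≤ #(S ∩ closedNbhd G v) := by exact_mod_cast card_pos.mpr ⟨v, hvN⟩
  have hdS : (#(S ∩ closedNbhd G v) : ℝ) ≤ #S := by exact_mod_cast card_le_card inter_subset_left
  have hsplit : (#(S \ closedNbhd G v) : ℝ) + #(S ∩ closedNbhd G v) = #S := by
    exact_mod_cast card_sdiff_add_card_inter S (closedNbhd G v)
  have hdel : (theta (indComplexOn G (S.erase v)) : ℝ) ≤ 2 * √(#S * m) := by
    have : (#(S.erase v) : ℝ) ≤ #S := by exact_mod_cast card_erase_le
    exact (ih _ (erase_ssubset hv)).trans (by gcongr)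
  have hlk : (theta (indComplexOn G (S \ closedNbhd G v)) : ℝ) + 1 ≤ 2 * √(#S * m) :=
    calc (theta (indComplexOn G (S \ closedNbhd G v)) : ℝ) + 1
        ≤ 2 * √(#(S \ closedNbhd G v) * m) + 1 := by
          gcongr
          exact ih _ (sdiff_closedNbhd_ssubset hv)
      _ = 2 * √(#S * m - m * #(S ∩ closedNbhd G v)) + 1 := by
          rw [← hsplit]; ring_nf
      _ ≤ 2 * √(#S * m) := two_mul_sqrt_sub_add_one_le (by nlinarith) hdeg (by nlinarith)
  calc (theta (indComplexOn G S) : ℝ)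
      ≤ max (theta (indComplexOn G (S.erase v)) : ℝ)
          (theta (indComplexOn G (S \ closedNbhd G v)) + 1) := by
        exact_mod_cast theta_indComplexOn_le_max hv hu hvu
    _ ≤ 2 * √(#S * m) := max_le hdel hlk

theorem theta_indComplexOn_le_two_mul_sqrt (S : Finset V) :
    (theta (indComplexOn G S) : ℝ) ≤ 2 * √(#S * inducedMatchingNum G) := by
  induction S using Finset.strongInduction with
  | H S ih =>
  set m : ℝ := (inducedMatchingNum G : ℝ)
  by_cases hS : IsIndepSet G S
  · rw [theta_indComplexOn_eq_zero hS, Nat.cast_zero]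
    positivity
  obtain ⟨x, -, y, -, hxy⟩ : ∃ x ∈ S, ∃ y ∈ S, G.Adj x y := by
    simpa [IsIndepSet] using hS
  have hm : 1 ≤ m := Nat.one_le_cast.mpr (one_le_inducedMatchingNum hxy)
  by_cases hhigh : ∃ v ∈ S, (∃ u ∈ S, G.Adj v u) ∧ √(#S * m) ≤ m * #(S ∩ closedNbhd G v)
  · obtain ⟨v, hv, ⟨u, hu, hvu⟩, hdeg⟩ := hhigh
    exact theta_indComplexOn_le_two_mul_sqrt_of_high_degree hm ih hv hu hvu hdeg
  · push Not at hhigh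
    calc (theta (indComplexOn G S) : ℝ) ≤ 2 * m * (√(#S * m) / m) := by
          refine theta_indComplexOn_le_of_degree_le (by positivity) fun v hv hadj => ?_
          rw [le_div_iff₀ (by positivity)]
          linarith [hhigh v hv hadj]
      _ = 2 * √(#S * m) := by field_simp

end Graphs

theorem theta_le_two_mul_sqrt_card_mul_im {V : Type*} [Fintype V] [DecidableEq V] (G : SimpleGraph V) :
    (thetaG G : ℝ) ≤
      2 * Real.sqrt ((Fintype.card V : ℝ) * (inducedMatchingNum G : ℝ)) := by
  simpa [thetaG, indComplex_eq_indComplexOn_univ] using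
    theta_indComplexOn_le_two_mul_sqrt (G := G) Finset.univ

end ThetaPaper
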